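/- arXiv:1303.5022 — 4 statements merged into one kernel-verified Lean document; each statement's English description precedes it below -/
import Mathlib

section
/- For all n and ℓ ≥ 2, every simple graph on n vertices with more than ((ℓ-2)/2)·n edges contains a path with ℓ vertices (equivalently, a path with ℓ-1 edges). -/
open SimpleGraph

lemma path_trunc {V : Type*} {G : SimpleGraph V} (m : ℕ) :
    ∀ {u v : V} (w : G.Walk u v), w.IsPath → m ≤ w.length →
    ∃ (a b : V) (p : G.Walk a b), p.IsPath ∧ p.length = m := by
  intro u v w
  induction w with
  | nil =>
    intro hp hm
    simp only [Walk.length_nil, Nat.le_zero] at hm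
    exact ⟨u, u, Walk.nil, Walk.IsPath.nil, by simp [hm]⟩
  | cons h p ih =>
    intro hp hm
    rcases Nat.lt_or_ge m (p.length + 1) with hlt | hge
    · exact ih hp.of_cons (by omega)
    · refine ⟨_, _, Walk.cons h p, hp, ?_⟩
      rw [Walk.length_cons] at hm ⊢
      omega

lemma walk_split {V : Type*} {G : SimpleGraph V} :
    ∀ {u v : V} (w : G.Walk u v) (i : ℕ), i ≤ w.length →
    ∃ (x : V) (q1 : G.Walk u x) (q2 : G.Walk x v),
      q1.append q2 = w ∧ q1.length = i ∧ x = w.getVert i := by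
  intro u v w
  induction w with
  | nil =>
    intro i hi
    simp only [Walk.length_nil, Nat.le_zero] at hi
    subst hi
    exact ⟨_, Walk.nil, Walk.nil, rfl, rfl, rfl⟩
  | @cons a b c h p ih =>
    intro i hi
    cases i with
    | zero => exact ⟨a, Walk.nil, Walk.cons h p, rfl, rfl, (Walk.getVert_zero _).symm⟩
    | succ i =>
      obtain ⟨x, q1, q2, hap, hlen, hx⟩ := ih i (by simpa [Walk.length_cons] using hi)
      exact ⟨x, Walk.cons h q1, q2, by rw [Walk.cons_append, hap],
        by simp [hlen], by rw [hx, Walk.getVert_cons_succ]⟩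


lemma core_lemma {V : Type} [Fintype V] {G : SimpleGraph V} (hc : G.Preconnected)
    {u v : V} (w : G.Walk u v) (hw : w.IsPath)
    (hmax : ∀ (a b : V) (p : G.Walk a b), p.IsPath → p.length ≤ w.length)
    (hdeg : w.length + 1 ≤ (G.neighborSet u).ncard + (G.neighborSet v).ncard)
    (hcard : w.length + 1 < Fintype.card V) : False := by
  classical
  -- neighbors of the endpoints lie on the path
  have hnu : ∀ z, G.Adj u z → z ∈ w.support := by
    intro z hz
    by_contra hzs
    have h1 : (Walk.cons hz.symm w).IsPath := hw.cons hzs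
    have h2 := hmax _ _ _ h1
    rw [Walk.length_cons] at h2
    omega
  have hnv : ∀ z, G.Adj v z → z ∈ w.support := by
    intro z hz
    by_contra hzs
    have h1 : (Walk.cons hz.symm w.reverse).IsPath :=
      hw.reverse.cons (by simpa [Walk.support_reverse] using hzs)
    have h2 := hmax _ _ _ h1
    rw [Walk.length_cons, Walk.length_reverse] at h2
    omega
  set k := w.length with hk
  -- pigeonhole: find a crossing index i
  set A : Finset ℕ := (Finset.range k).filter (fun i => G.Adj u (w.getVert (i+1))) with hA
  set B : Finset ℕ := (Finset.range k).filter (fun i => G.Adj v (w.getVert i)) with hB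
  have hAcard : (G.neighborSet u).ncard ≤ A.card := by
    have hsub : G.neighborFinset u ⊆ A.image (fun i => w.getVert (i+1)) := by
      intro z hz
      rw [mem_neighborFinset] at hz
      obtain ⟨j, hj1, hj2⟩ := (Walk.mem_support_iff_exists_getVert).mp (hnu z hz)
      have hj0 : j ≠ 0 := by
        rintro rfl
        rw [Walk.getVert_zero] at hj1
        subst hj1
        exact G.irrefl hz
      have hj1' : w.getVert (j - 1 + 1) = z := by rwa [Nat.sub_add_cancel (by omega)]
      refine Finset.mem_image.mpr ⟨j - 1, ?_, hj1'⟩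
      rw [hA, Finset.mem_filter, Finset.mem_range]
      exact ⟨by omega, by rw [hj1']; exact hz⟩
    have h1 : (G.neighborSet u).ncard = (G.neighborFinset u).card := by
      rw [Set.ncard_eq_toFinset_card', neighborFinset_def]
    rw [h1]
    exact le_trans (Finset.card_le_card hsub) Finset.card_image_le
  have hBcard : (G.neighborSet v).ncard ≤ B.card := by
    have hsub : G.neighborFinset v ⊆ B.image (fun i => w.getVert i) := by
      intro z hz
      rw [mem_neighborFinset] at hz
      obtain ⟨j, hj1, hj2⟩ := (Walk.mem_support_iff_exists_getVert).mp (hnv z hz)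
      have hjk : j ≠ k := by
        rintro rfl
        rw [hk, Walk.getVert_length] at hj1
        subst hj1
        exact G.irrefl hz
      refine Finset.mem_image.mpr ⟨j, ?_, hj1⟩
      rw [hB, Finset.mem_filter, Finset.mem_range]
      exact ⟨by omega, by rw [hj1]; exact hz⟩
    have h1 : (G.neighborSet v).ncard = (G.neighborFinset v).card := by
      rw [Set.ncard_eq_toFinset_card', neighborFinset_def]
    rw [h1]
    exact le_trans (Finset.card_le_card hsub) Finset.card_image_le
  have hABk : (A ∪ B).card ≤ k := by
    have : A ∪ B ⊆ Finset.range k := by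
      rw [hA, hB]
      exact Finset.union_subset (Finset.filter_subset _ _) (Finset.filter_subset _ _)
    simpa using Finset.card_le_card this
  have hint : (A ∩ B).Nonempty := by
    rw [← Finset.card_pos]
    have := Finset.card_union_add_card_inter A B
    omega
  obtain ⟨i, hi⟩ := hint
  rw [Finset.mem_inter, hA, hB, Finset.mem_filter, Finset.mem_filter, Finset.mem_range] at hi
  obtain ⟨⟨hik, hui⟩, _, hvi⟩ := hi
  -- a vertex outside the path
  have hout : ∃ x : V, x ∉ w.support := by
    by_contra hcon
    push_neg at hcon
    have h1 : (Finset.univ : Finset V) ⊆ w.support.toFinset :=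
      fun x _ => List.mem_toFinset.mpr (hcon x)
    have h2 : Fintype.card V ≤ w.support.toFinset.card := by
      simpa using Finset.card_le_card h1
    have h3 := w.support.toFinset_card_le
    rw [Walk.length_support] at h3
    omega
  obtain ⟨x0, hx0⟩ := hout
  obtain ⟨d, _, hd1, hd2⟩ := (hc u x0).some.exists_boundary_dart {x | x ∈ w.support}
    (w.start_mem_support) hx0
  have hd2' : d.snd ∉ w.support := hd2
  have hdadj : G.Adj d.fst d.snd := d.adj
  obtain ⟨j, hj1, hjk⟩ := (Walk.mem_support_iff_exists_getVert).mp hd1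
  rw [← hk] at hjk
  -- helper to finish: any walk whose support is a permutation of d.snd :: w.support
  -- and whose length is k+1 contradicts maximality
  have hfinish : ∀ (s t : V) (P : G.Walk s t),
      P.support.Perm (d.snd :: w.support) → P.length = k + 1 → False := by
    intro s t P hperm hlen
    have hpath : P.IsPath := by
      rw [Walk.isPath_def]
      exact hperm.nodup_iff.mpr (List.nodup_cons.mpr ⟨hd2', hw.support_nodup⟩)
    have := hmax _ _ _ hpath
    omega
  -- split w at index i
  obtain ⟨m1, a, b, hab, halen, hm1⟩ := walk_split w i (by omega)
  have hablen : a.length + b.length = k := by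
    have := congrArg Walk.length hab
    rwa [Walk.length_append] at this
  have hbnil : ¬ b.Nil := Walk.not_nil_iff_lt_length.mpr (by omega)
  have hbc : Walk.cons (b.adj_snd hbnil) b.tail = b := Walk.cons_tail_eq b hbnil
  have hclen : b.tail.length = k - i - 1 := by
    have := congrArg Walk.length hbc
    rw [Walk.length_cons] at this
    omega
  have hbg1 : w.getVert (i+1) = b.getVert 1 := by
    conv_lhs => rw [← hab]
    rw [Walk.getVert_append, halen, if_neg (by omega)]
    congr 1
    omega
  have hui' : G.Adj u (b.getVert 1) := hbg1 ▸ hui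
  have hvi' : G.Adj v m1 := by rw [hm1]; exact hvi
  have hwsup : w.support = a.support ++ b.tail.support := by
    conv_lhs => rw [← hab, ← hbc]
    rw [Walk.support_append, Walk.support_cons, List.tail_cons]
  rcases Nat.lt_trichotomy j i with hji | hji | hji
  · -- case j < i : split a at index j
    obtain ⟨m2, a1, a2, ha12, ha1len, hm2⟩ := walk_split a j (by omega)
    have ha12len : a1.length + a2.length = i := by
      have := congrArg Walk.length ha12
      rwa [Walk.length_append, halen] at this
    have ha2nil : ¬ a2.Nil := Walk.not_nil_iff_lt_length.mpr (by omega)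
    have ha2c : Walk.cons (a2.adj_snd ha2nil) a2.tail = a2 := Walk.cons_tail_eq a2 ha2nil
    have ha3len : a2.tail.length = i - j - 1 := by
      have := congrArg Walk.length ha2c
      rw [Walk.length_cons] at this
      omega
    have haw : a.getVert j = w.getVert j := by
      conv_rhs => rw [← hab]
      rw [Walk.getVert_append, if_pos (by omega)]
    have hm2w : d.fst = m2 := by rw [hm2, haw, ← hj1]
    have hasup : a.support = a1.support ++ a2.tail.support := by
      conv_lhs => rw [← ha12, ← ha2c]
      rw [Walk.support_append, Walk.support_cons, List.tail_cons]
    refine hfinish _ _ (Walk.cons (hm2w ▸ hdadj).symm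
      (a1.reverse.append (Walk.cons hui'
        (b.tail.append (Walk.cons hvi' a2.tail.reverse))))) ?_ ?_
    · rw [hwsup, hasup]
      simp only [Walk.support_cons, Walk.support_append, Walk.support_reverse, List.tail_cons]
      refine List.Perm.cons _ ?_
      rw [List.perm_iff_count]
      intro z
      simp [List.count_append, List.count_reverse]
      ring
    · simp only [Walk.length_cons, Walk.length_append, Walk.length_reverse]
      omega
  · -- case j = i
    subst hji
    have hfd : d.fst = m1 := by rw [hm1, ← hj1]
    refine hfinish _ _ (Walk.cons (hfd ▸ hdadj).symm
      (a.reverse.append (Walk.cons hui' b.tail))) ?_ ?_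
    · rw [hwsup]
      simp only [Walk.support_cons, Walk.support_append, Walk.support_reverse, List.tail_cons]
      refine List.Perm.cons _ ?_
      rw [List.perm_iff_count]
      intro z
      simp [List.count_append, List.count_reverse]
    · simp only [Walk.length_cons, Walk.length_append, Walk.length_reverse]
      omega
  · -- case i < j
    by_cases hjkk : j = k
    · -- the dart starts at the endpoint v
      have hfv : d.fst = v := by rw [← hj1, hjkk, hk, Walk.getVert_length]
      refine hfinish _ _ (Walk.cons (hfv ▸ hdadj).symm w.reverse) ?_ ?_
      · simp only [Walk.support_cons, Walk.support_reverse]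
        exact List.Perm.cons _ (List.reverse_perm _)
      · simp only [Walk.length_cons, Walk.length_reverse]
        omega
    · -- i < j < k : split b.tail at index j - i - 1
      obtain ⟨m3, c1, c2, hc12, hc1len, hm3⟩ := walk_split b.tail (j - i - 1) (by omega)
      have hc12len : c1.length + c2.length = k - i - 1 := by
        have := congrArg Walk.length hc12
        rwa [Walk.length_append, hclen] at this
      have hc2nil : ¬ c2.Nil := Walk.not_nil_iff_lt_length.mpr (by omega)
      have hc2c : Walk.cons (c2.adj_snd hc2nil) c2.tail = c2 := Walk.cons_tail_eq c2 hc2nil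
      have hc3len : c2.tail.length = k - j - 1 := by
        have := congrArg Walk.length hc2c
        rw [Walk.length_cons] at this
        omega
      have hm3w : d.fst = m3 := by
        rw [hm3]
        have hbtw : b.tail.getVert (j - i - 1) = w.getVert j := by
          conv_rhs => rw [← hab]
          rw [Walk.getVert_append, if_neg (by omega), halen]
          conv_rhs => rw [← hbc]
          rw [Walk.getVert_cons b.tail _ (show j - i ≠ 0 by omega)]
        rw [hbtw, ← hj1]
      have hbtsup : b.tail.support = c1.support ++ c2.tail.support := by
        conv_lhs => rw [← hc12, ← hc2c]
        rw [Walk.support_append, Walk.support_cons, List.tail_cons]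
      refine hfinish _ _ (Walk.cons (hm3w ▸ hdadj).symm
        (c1.reverse.append (Walk.cons hui'.symm
          (a.append (Walk.cons hvi'.symm c2.tail.reverse))))) ?_ ?_
      · rw [hwsup, hbtsup]
        simp only [Walk.support_cons, Walk.support_append, Walk.support_reverse, List.tail_cons]
        refine List.Perm.cons _ ?_
        rw [List.perm_iff_count]
        intro z
        simp [List.count_append, List.count_reverse]
        ring
      · simp only [Walk.length_cons, Walk.length_append, Walk.length_reverse]
        omega

lemma exists_max_path {V : Type} [Fintype V] [Nonempty V] (G : SimpleGraph V) :
    ∃ (u v : V) (w : G.Walk u v), w.IsPath ∧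
      ∀ (a b : V) (p : G.Walk a b), p.IsPath → p.length ≤ w.length := by
  classical
  set n := Fintype.card V with hn
  set T : Finset ℕ := (Finset.range (n+1)).filter
    (fun k => ∃ (u v : V) (w : G.Walk u v), w.IsPath ∧ w.length = k) with hT
  have hT0 : 0 ∈ T := by
    refine Finset.mem_filter.mpr ⟨Finset.mem_range.mpr (by omega), ?_⟩
    obtain ⟨x⟩ := ‹Nonempty V›
    exact ⟨x, x, Walk.nil, Walk.IsPath.nil, rfl⟩
  have hTne : T.Nonempty := ⟨0, hT0⟩
  obtain ⟨u, v, w, hw, hwl⟩ := (Finset.mem_filter.mp (T.max'_mem hTne)).2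
  refine ⟨u, v, w, hw, ?_⟩
  intro a b p hp
  have hmem : p.length ∈ T := Finset.mem_filter.mpr
    ⟨Finset.mem_range.mpr (by have := hp.length_lt; omega), ⟨a, b, p, hp, rfl⟩⟩
  rw [hwl]
  exact Finset.le_max' T _ hmem

lemma mem_induce_image {V : Type} (G : SimpleGraph V) (s : Set V) {x y : V}
    (hx : x ∈ s) (hy : y ∈ s) (hadj : G.Adj x y) :
    s(x, y) ∈ Sym2.map (Subtype.val) '' (G.induce s).edgeSet := by
  refine ⟨s(⟨x, hx⟩, ⟨y, hy⟩), ?_, rfl⟩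
  rw [SimpleGraph.mem_edgeSet]
  exact hadj

lemma induce_ncard_image {V : Type} (G : SimpleGraph V) (s : Set V) :
    (Sym2.map (Subtype.val : s → V) '' (G.induce s).edgeSet).ncard
      = (G.induce s).edgeSet.ncard :=
  Set.ncard_image_of_injective _ (Sym2.map.injective Subtype.val_injective)

lemma EG_aux (ℓ : ℕ) (hℓ : 2 ≤ ℓ) :
    ∀ (N : ℕ) (V : Type) [Fintype V] (G : SimpleGraph V), Fintype.card V = N →
      (ℓ - 2) * N < 2 * G.edgeSet.ncard →
      ∃ (a b : V) (p : G.Walk a b), p.IsPath ∧ ℓ - 1 ≤ p.length := by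
  intro N
  induction N using Nat.strong_induction_on with
  | _ N ih =>
    intro V instV G hcard h
    classical
    have hlift : ∀ (s : Set V) (a b : s) (p : (G.induce s).Walk a b), p.IsPath → ℓ - 1 ≤ p.length →
        ∃ (a b : V) (q : G.Walk a b), q.IsPath ∧ ℓ - 1 ≤ q.length := by
      intro s a b p hp hl
      exact ⟨_, _, p.map (SimpleGraph.Embedding.induce (G := G) s).toHom,
        Walk.map_isPath_of_injective (SimpleGraph.Embedding.induce (G := G) s).injective hp,
        by rwa [Walk.length_map]⟩
    by_cases hdel : ∃ x : V, 2 * (G.neighborSet x).ncard ≤ ℓ - 2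
    · -- delete a low-degree vertex
      obtain ⟨x, hx⟩ := hdel
      have hN1 : 1 ≤ N := by
        rw [← hcard]
        exact Fintype.card_pos_iff.mpr ⟨x⟩
      have hcards : Fintype.card (↥({x}ᶜ : Set V)) = N - 1 := by
        rw [Fintype.card_compl_set, Set.card_singleton, hcard]
      have hsub : G.edgeSet ⊆
          (Sym2.map Subtype.val '' (G.induce ({x}ᶜ : Set V)).edgeSet) ∪ G.incidenceSet x := by
        intro e he
        induction e using Sym2.ind with
        | _ a b =>
          rw [SimpleGraph.mem_edgeSet] at he
          by_cases hxa : x = a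
          · exact Or.inr ⟨(G.mem_edgeSet).mpr he, Sym2.mem_iff.mpr (Or.inl hxa)⟩
          · by_cases hxb : x = b
            · exact Or.inr ⟨(G.mem_edgeSet).mpr he, Sym2.mem_iff.mpr (Or.inr hxb)⟩
            · exact Or.inl (mem_induce_image G _ (fun hh => hxa hh.symm) (fun hh => hxb hh.symm) he)
      have hinc : (G.incidenceSet x).ncard = (G.neighborSet x).ncard := by
        rw [← Nat.card_coe_set_eq, ← Nat.card_coe_set_eq]
        exact Nat.card_congr (G.incidenceSetEquivNeighborSet x)
      have hEle : G.edgeSet.ncard ≤ (G.induce ({x}ᶜ : Set V)).edgeSet.ncard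
          + (G.neighborSet x).ncard := by
        calc G.edgeSet.ncard
            ≤ ((Sym2.map Subtype.val '' (G.induce ({x}ᶜ : Set V)).edgeSet)
                ∪ G.incidenceSet x).ncard := Set.ncard_le_ncard hsub (Set.toFinite _)
          _ ≤ (Sym2.map Subtype.val '' (G.induce ({x}ᶜ : Set V)).edgeSet).ncard
                + (G.incidenceSet x).ncard := Set.ncard_union_le _ _
          _ = _ := by rw [induce_ncard_image, hinc]
      have hstep : (ℓ - 2) * (N - 1) < 2 * (G.induce ({x}ᶜ : Set V)).edgeSet.ncard := by
        have e1 : (ℓ - 2) * (N - 1) + (ℓ - 2) = (ℓ - 2) * N := by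
          rw [← Nat.mul_succ, Nat.succ_eq_add_one, Nat.sub_add_cancel hN1]
        omega
      obtain ⟨a, b, p, hp, hplen⟩ := ih (N-1) (by omega) ↥({x}ᶜ : Set V) (G.induce _) hcards hstep
      exact hlift _ a b p hp hplen
    · push_neg at hdel
      have hEpos : G.edgeSet.Nonempty := Set.nonempty_of_ncard_ne_zero (by omega)
      obtain ⟨e0, he0⟩ := hEpos
      induction e0 using Sym2.ind with
      | _ x0 y0 =>
      rw [SimpleGraph.mem_edgeSet] at he0
      set S : Set V := {y | G.Reachable x0 y} with hS
      by_cases hall : ∀ y, y ∈ S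
      · -- G is connected: use the longest-path argument
        have hpre : G.Preconnected := fun a b => (hall a).symm.trans (hall b)
        have hnev : Nonempty V := ⟨x0⟩
        obtain ⟨p0u, p0v, w, hw, hmax⟩ := exists_max_path G
        rcases Nat.lt_or_ge w.length (ℓ - 1) with hlen | hlen
        swap
        · exact ⟨_, _, w, hw, hlen⟩
        exfalso
        have hnch : 2 * G.edgeSet.ncard ≤ N * (N - 1) := by
          have h1 : G.edgeSet.toFinset = G.edgeFinset := by
            ext e
            simp [SimpleGraph.mem_edgeFinset]
          have h2 : G.edgeSet.ncard ≤ (Fintype.card V).choose 2 := by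
            rw [Set.ncard_eq_toFinset_card', h1]
            exact SimpleGraph.card_edgeFinset_le_card_choose_two
          rw [hcard] at h2
          have h3 := Nat.choose_two_right N
          have h4 := Nat.div_mul_le_self (N * (N - 1)) 2
          omega
        have hlN : ℓ ≤ N := by
          by_contra hNl
          push_neg at hNl
          have h2 : N * (N - 1) ≤ N * (ℓ - 2) := Nat.mul_le_mul_left _ (by omega)
          rw [Nat.mul_comm N (ℓ - 2)] at h2
          omega
        refine core_lemma hpre w hw hmax ?_ ?_
        · have hu := hdel p0u
          have hv := hdel p0v
          omega
        · rw [hcard]; omega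
      · -- G is disconnected: split into the component of x0 and the rest
        push_neg at hall
        obtain ⟨y0', hy0⟩ := hall
        have hSadj : ∀ {a b : V}, G.Adj a b → a ∈ S → b ∈ S :=
          fun hab ha => ha.trans hab.reachable
        have hn12 : Fintype.card ↥S + Fintype.card ↥(Sᶜ) = N := by
          rw [Fintype.card_compl_set, hcard]
          have : Fintype.card ↥S ≤ N := by
            rw [← hcard]
            exact Fintype.card_le_of_injective _ Subtype.val_injective
          omega
        have hn1 : 1 ≤ Fintype.card ↥S := Fintype.card_pos_iff.mpr ⟨⟨x0, Reachable.refl x0⟩⟩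
        have hn2 : 1 ≤ Fintype.card ↥(Sᶜ) := Fintype.card_pos_iff.mpr ⟨⟨y0', hy0⟩⟩
        have hsub : G.edgeSet ⊆ (Sym2.map Subtype.val '' (G.induce S).edgeSet)
            ∪ (Sym2.map Subtype.val '' (G.induce (Sᶜ)).edgeSet) := by
          intro e he
          induction e using Sym2.ind with
          | _ a b =>
            rw [SimpleGraph.mem_edgeSet] at he
            by_cases haS : a ∈ S
            · exact Or.inl (mem_induce_image G S haS (hSadj he haS) he)
            · exact Or.inr (mem_induce_image G (Sᶜ) haS
                (fun hb => haS (hSadj he.symm hb)) he)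
        have hcount : G.edgeSet.ncard ≤ (G.induce S).edgeSet.ncard
            + (G.induce (Sᶜ)).edgeSet.ncard := by
          calc G.edgeSet.ncard
              ≤ _ := Set.ncard_le_ncard hsub (Set.toFinite _)
            _ ≤ _ := Set.ncard_union_le _ _
            _ = _ := by rw [induce_ncard_image, induce_ncard_image]
        by_cases h1 : (ℓ - 2) * Fintype.card ↥S < 2 * (G.induce S).edgeSet.ncard
        · obtain ⟨a, b, p, hp, hplen⟩ := ih (Fintype.card ↥S) (by omega) ↥S (G.induce S) rfl h1
          exact hlift _ a b p hp hplen
        · push_neg at h1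
          have h2 : (ℓ - 2) * Fintype.card ↥(Sᶜ) < 2 * (G.induce (Sᶜ)).edgeSet.ncard := by
            have e1 : (ℓ - 2) * Fintype.card ↥S + (ℓ - 2) * Fintype.card ↥(Sᶜ)
                = (ℓ - 2) * N := by rw [← Nat.mul_add, hn12]
            omega
          obtain ⟨a, b, p, hp, hplen⟩ :=
            ih (Fintype.card ↥(Sᶜ)) (by omega) ↥(Sᶜ) (G.induce (Sᶜ)) rfl h2
          exact hlift _ a b p hp hplen


/-- Erdős–Gallai: a graph on `n` vertices with more than `((ℓ-2)/2)·n` edges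
(i.e. `2·|E| > (ℓ-2)·n`) contains a path on `ℓ` vertices, i.e. of length `ℓ-1`. -/
theorem erdos_gallai_path (n ℓ : ℕ) (hℓ : 2 ≤ ℓ) (G : SimpleGraph (Fin n))
    (h : (ℓ - 2) * n < 2 * G.edgeSet.ncard) :
    ∃ (u v : Fin n) (w : G.Walk u v), w.IsPath ∧ w.length = ℓ - 1 := by
  obtain ⟨a, b, p, hp, hlen⟩ := EG_aux ℓ hℓ n (Fin n) G (Fintype.card_fin n) h
  obtain ⟨a', b', q, hq, hqe⟩ := path_trunc (ℓ - 1) p hp hlen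
  exact ⟨a', b', q, hq, hqe⟩
end

section
/- Keevash–Mubayi–Wilson bound: Let r ≥ 3 and let H be an r-uniform hypergraph on n vertices such that no two edges of H intersect in exactly one vertex. Then H has at most C(n, r-2) edges. -/
open Finset

section NSIBArith

/-- Alternating partial sum of binomial coefficients. -/
lemma nsib_alt_sum (M : ℕ) : ∀ i : ℕ,
    ∑ j ∈ Finset.range (i+1), (-1:ℤ)^(i-j) * ((M+1).choose j) = (M.choose i : ℤ) := by
  intro i
  induction i with
  | zero => simp
  | succ i ih =>
    rw [Finset.sum_range_succ]
    have h1 : ∀ j ∈ Finset.range (i+1),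
        (-1:ℤ)^(i+1-j) * ((M+1).choose j) = -((-1:ℤ)^(i-j) * ((M+1).choose j)) := by
      intro j hj
      rw [Finset.mem_range] at hj
      have : i + 1 - j = (i - j) + 1 := by omega
      rw [this, pow_succ]
      ring
    rw [Finset.sum_congr rfl h1, Finset.sum_neg_distrib, ih]
    have hp : (M+1).choose (i+1) = M.choose i + M.choose (i+1) := Nat.choose_succ_succ _ _
    have : i + 1 - (i + 1) = 0 := by omega
    rw [this, pow_zero, hp]
    push_cast
    ring

lemma nsib_tri_sum (f : ℕ → ℤ) : ∀ d : ℕ,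
    ∑ j ∈ Finset.range (d+1), ((d+1-j : ℕ) : ℤ) * f j
      = ∑ i ∈ Finset.range (d+1), ∑ j ∈ Finset.range (i+1), f j := by
  intro d
  induction d with
  | zero => simp
  | succ d ih =>
    rw [Finset.sum_range_succ (f := fun i => ∑ j ∈ Finset.range (i+1), f j), ← ih]
    have h1 : ∀ j ∈ Finset.range (d+2),
        ((d+2-j : ℕ) : ℤ) * f j = ((d+1-j : ℕ) : ℤ) * f j + f j := by
      intro j hj
      rw [Finset.mem_range] at hj
      have h2 : (d + 2 - j : ℕ) = (d + 1 - j) + 1 := by omega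
      rw [h2]
      push_cast
      ring
    rw [Finset.sum_congr rfl h1, Finset.sum_add_distrib]
    have h3 : ∑ j ∈ Finset.range (d+2), ((d+1-j : ℕ) : ℤ) * f j
        = ∑ j ∈ Finset.range (d+1), ((d+1-j : ℕ) : ℤ) * f j := by
      rw [Finset.sum_range_succ]
      simp
    rw [h3]

lemma nsib_gid (m d : ℕ) :
    ∑ j ∈ Finset.range (d+1), ((-1:ℤ)^(d-j) * ((d+1-j : ℕ) : ℤ)) * ((m+2).choose j : ℤ)
      = (m.choose d : ℤ) := by
  have h0 : ∀ j ∈ Finset.range (d+1),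
      ((-1:ℤ)^(d-j) * ((d+1-j : ℕ) : ℤ)) * ((m+2).choose j : ℤ)
        = ((d+1-j : ℕ) : ℤ) * ((-1:ℤ)^(d-j) * ((m+2).choose j : ℤ)) := by
    intro j _; ring
  rw [Finset.sum_congr rfl h0, nsib_tri_sum (fun j => (-1:ℤ)^(d-j) * ((m+2).choose j : ℤ)) d]
  have h1 : ∀ i ∈ Finset.range (d+1),
      ∑ j ∈ Finset.range (i+1), (-1:ℤ)^(d-j) * ((m+2).choose j : ℤ)
        = (-1:ℤ)^(d-i) * ((m+1).choose i : ℤ) := by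
    intro i hi
    rw [Finset.mem_range] at hi
    have h2 : ∀ j ∈ Finset.range (i+1),
        (-1:ℤ)^(d-j) * ((m+2).choose j : ℤ)
          = (-1:ℤ)^(d-i) * ((-1:ℤ)^(i-j) * ((m+2).choose j : ℤ)) := by
      intro j hj
      rw [Finset.mem_range] at hj
      rw [← mul_assoc, ← pow_add]
      have : d - i + (i - j) = d - j := by omega
      rw [this]
    rw [Finset.sum_congr rfl h2, ← Finset.mul_sum]
    rw [nsib_alt_sum (m+1) i]
  rw [Finset.sum_congr rfl h1]
  exact nsib_alt_sum m d

/-- The coefficient sequence. -/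
def nsibC (d : ℕ) (j : ℕ) : ℤ := (-1:ℤ)^(d-j) * ((d+1-j : ℕ) : ℤ)

/-- The weight polynomial `Gd`. -/
def nsibG (d : ℕ) (m : ℕ) : ℤ := ∑ j ∈ Finset.range (d+1), nsibC d j * (m.choose j : ℤ)

lemma nsibC_eq_zero {d j : ℕ} (h : d + 1 ≤ j) : nsibC d j = 0 := by
  unfold nsibC
  have : d + 1 - j = 0 := by omega
  rw [this]
  simp

lemma nsibG_two (d m : ℕ) : nsibG d (m+2) = (m.choose d : ℤ) := nsib_gid m d

lemma nsibG_zero (d : ℕ) : nsibG d 0 = (-1:ℤ)^d * ((d+1 : ℕ) : ℤ) := by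
  unfold nsibG
  rw [Finset.sum_eq_single 0]
  · simp [nsibC]
  · intro j _ hj
    have : (0:ℕ).choose j = 0 := by
      cases j with
      | zero => exact absurd rfl hj
      | succ j => simp [Nat.choose_eq_zero_of_lt]
    rw [this]
    simp
  · intro h
    exact absurd (Finset.mem_range.2 (by omega)) h

/-- Sum of coefficients over a powerset. -/
lemma nsib_sumc {α : Type*} [DecidableEq α] (d : ℕ) (A : Finset α) :
    ∑ R ∈ A.powerset, nsibC d R.card = nsibG d A.card := by
  classical
  rw [Finset.sum_powerset_apply_card]
  set m := A.card with hm
  have hL : ∑ j ∈ Finset.range (m+1), (m.choose j) • nsibC d j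
      = ∑ j ∈ Finset.range (m + d + 2), nsibC d j * (m.choose j : ℤ) := by
    rw [Finset.sum_congr rfl fun j _ => by rw [nsmul_eq_mul, mul_comm]]
    apply Finset.sum_subset (Finset.range_subset_range.2 (by omega))
    intro j _ hj
    rw [Finset.mem_range, not_lt] at hj
    have hz : m.choose j = 0 := Nat.choose_eq_zero_of_lt (by omega)
    rw [hz]
    simp
  have hR : nsibG d m = ∑ j ∈ Finset.range (m + d + 2), nsibC d j * (m.choose j : ℤ) := by
    unfold nsibG
    apply Finset.sum_subset (Finset.range_subset_range.2 (by omega))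
    intro j _ hj
    rw [Finset.mem_range, not_lt] at hj
    rw [nsibC_eq_zero (by omega)]
    ring
  rw [hL, hR]

end NSIBArith

section NSIBCore

variable {n r : ℕ} {H : Finset (Finset (Fin n))}

/-- Balance propagates downward to all levels `≤ r - 2`. -/
lemma nsib_bal (hr : 3 ≤ r) (huniform : ∀ E ∈ H, E.card = r)
    (g : Finset (Fin n) → ℤ)
    (hbal : ∀ S : Finset (Fin n), S.card = r - 2 →
      ∑ E ∈ H.filter (fun E => S ⊆ E), g E = 0) :
    ∀ i, i ≤ r - 2 → ∀ R : Finset (Fin n), R.card = r - 2 - i →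
      ∑ E ∈ H.filter (fun E => R ⊆ E), g E = 0 := by
  intro i
  induction i with
  | zero =>
    intro _ R hR
    exact hbal R (by omega)
  | succ i ih =>
    intro hle R hR
    have hcomm :
        (∑ x ∈ Finset.univ \ R, ∑ E ∈ H.filter (fun E => insert x R ⊆ E), g E)
          = ∑ E ∈ H.filter (fun E => R ⊆ E), ∑ x ∈ E \ R, g E := by
      apply Finset.sum_comm'
      intro x E
      simp only [Finset.mem_sdiff, Finset.mem_filter, Finset.mem_univ, true_and,
        Finset.insert_subset_iff]
      constructor
      · rintro ⟨hxR, hE, hxE, hRE⟩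
        exact ⟨⟨hxE, hxR⟩, hE, hRE⟩
      · rintro ⟨⟨hxE, hxR⟩, hE, hRE⟩
        exact ⟨hxR, hE, hxE, hRE⟩
    have hzero : (∑ x ∈ Finset.univ \ R, ∑ E ∈ H.filter (fun E => insert x R ⊆ E), g E) = 0 := by
      apply Finset.sum_eq_zero
      intro x hx
      rw [Finset.mem_sdiff] at hx
      apply ih (by omega)
      rw [Finset.card_insert_of_notMem hx.2, hR]
      omega
    have hconst : ∀ E ∈ H.filter (fun E => R ⊆ E),
        (∑ x ∈ E \ R, g E) = ((r - R.card : ℕ) : ℤ) * g E := by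
      intro E hE
      rw [Finset.mem_filter] at hE
      rw [Finset.sum_const, Finset.card_sdiff_of_subset hE.2, huniform E hE.1, nsmul_eq_mul]
    rw [hcomm, Finset.sum_congr rfl hconst, ← Finset.mul_sum] at hzero
    have hne : ((r - R.card : ℕ) : ℤ) ≠ 0 := by
      have hpos : 0 < r - R.card := by omega
      positivity
    exact (mul_eq_zero.1 hzero).resolve_left hne

/-- The key identity: the value at an edge is determined by the disjoint edges. -/
lemma nsib_ident (hr : 3 ≤ r) (huniform : ∀ E ∈ H, E.card = r)
    (hint : ∀ E ∈ H, ∀ F ∈ H, (E ∩ F).card ≠ 1)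
    (g : Finset (Fin n) → ℤ)
    (hbal : ∀ S : Finset (Fin n), S.card = r - 2 →
      ∑ E ∈ H.filter (fun E => S ⊆ E), g E = 0)
    {F : Finset (Fin n)} (hF : F ∈ H) :
    g F + (-1:ℤ)^(r-2) * ((r-1 : ℕ) : ℤ)
        * (∑ E ∈ H.filter (fun E => E ∩ F = ∅), g E) = 0 := by
  classical
  set d := r - 2 with hd
  -- the weighted sum over subsets of F
  have hX0 : (∑ R ∈ F.powerset, nsibC d R.card * ∑ E ∈ H.filter (fun E => R ⊆ E), g E) = 0 := by
    apply Finset.sum_eq_zero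
    intro R _
    rcases le_or_gt R.card d with h | h
    · rw [nsib_bal hr huniform g hbal (d - R.card) (by omega) R (by omega)]
      ring
    · rw [nsibC_eq_zero (by omega)]
      ring
  have hswap : (∑ R ∈ F.powerset, nsibC d R.card * ∑ E ∈ H.filter (fun E => R ⊆ E), g E)
      = ∑ E ∈ H, nsibG d ((E ∩ F).card) * g E := by
    have h1 : ∀ R ∈ F.powerset,
        nsibC d R.card * ∑ E ∈ H.filter (fun E => R ⊆ E), g E
          = ∑ E ∈ H.filter (fun E => R ⊆ E), nsibC d R.card * g E := by
      intro R _
      rw [Finset.mul_sum]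
    rw [Finset.sum_congr rfl h1]
    have h2 : (∑ R ∈ F.powerset, ∑ E ∈ H.filter (fun E => R ⊆ E), nsibC d R.card * g E)
        = ∑ E ∈ H, ∑ R ∈ (E ∩ F).powerset, nsibC d R.card * g E := by
      apply Finset.sum_comm'
      intro R E
      simp only [Finset.mem_powerset, Finset.mem_filter, Finset.subset_inter_iff]
      tauto
    rw [h2]
    apply Finset.sum_congr rfl
    intro E _
    rw [← Finset.sum_mul, nsib_sumc]
  rw [hswap] at hX0
  -- split off the term at F
  rw [← Finset.sum_erase_add H _ hF, Finset.inter_self] at hX0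
  have hFr : F.card = r := huniform F hF
  have hGF : nsibG d F.card = 1 := by
    have : F.card = d + 2 := by omega
    rw [this, nsibG_two]
    simp
  rw [hFr] at hGF
  rw [hFr, hGF, one_mul] at hX0
  -- the remaining sum localizes to disjoint edges
  have hrest : (∑ E ∈ (H.erase F), nsibG d ((E ∩ F).card) * g E)
      = ∑ E ∈ H.filter (fun E => E ∩ F = ∅), ((-1:ℤ)^d * ((d+1 : ℕ) : ℤ)) * g E := by
    have hstep1 : (∑ E ∈ (H.erase F).filter (fun E => E ∩ F = ∅),
        nsibG d ((E ∩ F).card) * g E) = ∑ E ∈ (H.erase F), nsibG d ((E ∩ F).card) * g E := by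
      apply Finset.sum_filter_of_ne
      intro E hE hne
      by_contra hEF
      -- E ∩ F ≠ ∅, E ≠ F: show the coefficient vanishes
      have hEH : E ∈ H := Finset.mem_of_mem_erase hE
      have hEneF : E ≠ F := Finset.ne_of_mem_erase hE
      have hm1 : (E ∩ F).card ≠ 1 := hint E hEH F hF
      have hm0 : (E ∩ F).card ≠ 0 := fun h => hEF (Finset.card_eq_zero.1 h)
      have hmr : (E ∩ F).card < r := by
        by_contra hge
        push_neg at hge
        have hsub : E ∩ F ⊆ E := Finset.inter_subset_left
        have hcard : E.card ≤ (E ∩ F).card := by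
          rw [huniform E hEH]; exact hge
        have h3 : E ∩ F = E := Finset.eq_of_subset_of_card_le hsub hcard
        have h4 : E ⊆ F := by
          rw [← h3]
          exact Finset.inter_subset_right
        have h5 : E = F := Finset.eq_of_subset_of_card_le h4
          (by rw [huniform E hEH, huniform F hF])
        exact hEneF h5
      have hm2 : 2 ≤ (E ∩ F).card := by omega
      have hsplit : (E ∩ F).card = ((E ∩ F).card - 2) + 2 := by omega
      have hzero : nsibG d ((E ∩ F).card) = 0 := by
        rw [hsplit, nsibG_two]
        have : (E ∩ F).card - 2 < d := by omega
        rw [Nat.choose_eq_zero_of_lt this]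
        simp
      apply hne
      rw [hzero, zero_mul]
    have hstep2 : (H.erase F).filter (fun E => E ∩ F = ∅)
        = H.filter (fun E => E ∩ F = ∅) := by
      rw [Finset.filter_erase]
      apply Finset.erase_eq_of_notMem
      rw [Finset.mem_filter]
      rintro ⟨-, hFF⟩
      rw [Finset.inter_self] at hFF
      have : F.card = 0 := by rw [hFF]; simp
      omega
    rw [← hstep1, hstep2]
    apply Finset.sum_congr rfl
    intro E hE
    rw [Finset.mem_filter] at hE
    rw [hE.2, Finset.card_empty, nsibG_zero]
  rw [hrest, ← Finset.mul_sum] at hX0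
  have hd1 : (d + 1 : ℕ) = r - 1 := by omega
  rw [hd1] at hX0
  linarith [hX0]

end NSIBCore

section NSIBDescent

variable {n r : ℕ} {H : Finset (Finset (Fin n))}

/-- Infinite descent: any integer vector satisfying the balance conditions vanishes on `H`. -/
lemma nsib_descent (hr : 3 ≤ r) (huniform : ∀ E ∈ H, E.card = r)
    (hint : ∀ E ∈ H, ∀ F ∈ H, (E ∩ F).card ≠ 1) :
    ∀ (N : ℕ) (g : Finset (Fin n) → ℤ),
      (∀ S : Finset (Fin n), S.card = r - 2 →
        ∑ E ∈ H.filter (fun E => S ⊆ E), g E = 0) →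
      (∑ E ∈ H, (g E).natAbs) ≤ N → ∀ F ∈ H, g F = 0 := by
  intro N
  induction N with
  | zero =>
    intro g _ hsum F hF
    have h0 : ∀ E ∈ H, (g E).natAbs = 0 := by
      intro E hE
      have := Finset.sum_eq_zero_iff.1 (Nat.le_zero.1 hsum) E hE
      exact this
    exact Int.natAbs_eq_zero.1 (h0 F hF)
  | succ N ih =>
    intro g hbal hsum F hF
    by_cases hall : ∀ E ∈ H, g E = 0
    · exact hall F hF
    push_neg at hall
    obtain ⟨F₀, hF₀, hgF₀⟩ := hall
    have hrm : (1:ℕ) ≤ r - 1 := by omega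
    have hr2 : (2:ℕ) ≤ r - 1 := by omega
    have hdvd : ∀ E ∈ H, ((r-1 : ℕ) : ℤ) ∣ g E := by
      intro E hE
      have hid := nsib_ident hr huniform hint g hbal hE
      refine ⟨-((-1:ℤ)^(r-2) * ∑ E' ∈ H.filter (fun E' => E' ∩ E = ∅), g E'), ?_⟩
      linarith [hid]
    set g' : Finset (Fin n) → ℤ := fun E => g E / ((r-1 : ℕ) : ℤ) with hg'
    have hmul : ∀ E ∈ H, g E = ((r-1 : ℕ) : ℤ) * g' E := by
      intro E hE
      exact (Int.mul_ediv_cancel' (hdvd E hE)).symm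
    have hne : ((r-1 : ℕ) : ℤ) ≠ 0 := by positivity
    have hbal' : ∀ S : Finset (Fin n), S.card = r - 2 →
        ∑ E ∈ H.filter (fun E => S ⊆ E), g' E = 0 := by
      intro S hS
      have h1 : ((r-1 : ℕ) : ℤ) * ∑ E ∈ H.filter (fun E => S ⊆ E), g' E
          = ∑ E ∈ H.filter (fun E => S ⊆ E), g E := by
        rw [Finset.mul_sum]
        apply Finset.sum_congr rfl
        intro E hE
        exact (hmul E (Finset.mem_of_mem_filter E hE)).symm
      have h2 := hbal S hS
      rw [← h1] at h2
      exact (mul_eq_zero.1 h2).resolve_left hne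
    have hle : ∀ E ∈ H, (g' E).natAbs ≤ (g E).natAbs := by
      intro E hE
      rw [hmul E hE, Int.natAbs_mul, Int.natAbs_natCast]
      exact Nat.le_mul_of_pos_left _ (by omega)
    have hlt : (g' F₀).natAbs < (g F₀).natAbs := by
      have hne' : g' F₀ ≠ 0 := by
        intro h
        apply hgF₀
        rw [hmul F₀ hF₀, h, mul_zero]
      have h1 : 1 ≤ (g' F₀).natAbs := Nat.one_le_iff_ne_zero.2 (Int.natAbs_ne_zero.2 hne')
      rw [hmul F₀ hF₀, Int.natAbs_mul, Int.natAbs_natCast]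
      calc (g' F₀).natAbs < 2 * (g' F₀).natAbs := by omega
        _ ≤ (r-1) * (g' F₀).natAbs := Nat.mul_le_mul_right _ hr2
    have hsum' : (∑ E ∈ H, (g' E).natAbs) < ∑ E ∈ H, (g E).natAbs :=
      Finset.sum_lt_sum hle ⟨F₀, hF₀, hlt⟩
    have := ih g' hbal' (by omega) F hF
    rw [hmul F hF, this, mul_zero]

end NSIBDescent

/-- Keevash–Mubayi–Wilson: an `r`-uniform hypergraph (`r ≥ 3`) on `n` vertices
in which no two edges intersect in exactly one vertex has at most
`C(n, r-2)` edges. -/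
theorem no_singleton_intersection_bound (n r : ℕ) (hr : 3 ≤ r)
    (H : Finset (Finset (Fin n)))
    (huniform : ∀ E ∈ H, E.card = r)
    (hint : ∀ E ∈ H, ∀ F ∈ H, (E ∩ F).card ≠ 1) :
    H.card ≤ n.choose (r - 2) := by
  classical
  set v : {E // E ∈ H} → ({S // S ∈ (Finset.univ : Finset (Fin n)).powersetCard (r-2)} → ℚ) :=
    fun E S => if S.1 ⊆ E.1 then 1 else 0 with hv
  have li : LinearIndependent ℚ v := by
    rw [Fintype.linearIndependent_iff]
    intro gs hsum i
    set gq : Finset (Fin n) → ℚ := fun E => if h : E ∈ H then gs ⟨E, h⟩ else 0 with hgq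
    have hgqi : ∀ i : {E // E ∈ H}, gq i.1 = gs i := by
      rintro ⟨E, hE⟩
      rw [hgq]
      simp only
      rw [dif_pos hE]
    -- extract the balance equations over ℚ
    have hbalQ : ∀ S : Finset (Fin n), S.card = r - 2 →
        ∑ E ∈ H.filter (fun E => S ⊆ E), gq E = 0 := by
      intro S hS
      have hS' : S ∈ (Finset.univ : Finset (Fin n)).powersetCard (r-2) :=
        Finset.mem_powersetCard_univ.2 hS
      have h1 := congrFun hsum ⟨S, hS'⟩
      rw [Finset.sum_apply, Pi.zero_apply] at h1
      have h2 : ∀ i : {E // E ∈ H},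
          (gs i • v i) ⟨S, hS'⟩ = gq i.1 * (if S ⊆ i.1 then 1 else 0) := by
        intro i
        rw [Pi.smul_apply, smul_eq_mul, hgqi i, hv]
      rw [Finset.sum_congr rfl (fun i _ => h2 i)] at h1
      rw [Finset.univ_eq_attach] at h1
      rw [Finset.sum_attach H (fun E => gq E * (if S ⊆ E then 1 else 0))] at h1
      have h3 : (∑ a ∈ H, if S ⊆ a then gq a else 0)
          = ∑ x ∈ H, gq x * if S ⊆ x then 1 else 0 :=
        Finset.sum_congr rfl (fun E _ => by rw [mul_ite, mul_one, mul_zero])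
      rw [Finset.sum_filter, h3, h1]
    -- clear denominators
    set q : ℕ := ∏ E ∈ H, (gq E).den with hq
    have hqdvd : ∀ E ∈ H, (gq E).den ∣ q := fun E hE => Finset.dvd_prod_of_mem _ hE
    have hq0 : q ≠ 0 := by
      rw [hq]
      exact Finset.prod_ne_zero_iff.2 fun E _ => (gq E).den_nz
    set gZ : Finset (Fin n) → ℤ := fun E => (gq E).num * ((q / (gq E).den : ℕ) : ℤ) with hgZ
    have hcast : ∀ E ∈ H, ((gZ E : ℤ) : ℚ) = gq E * (q : ℚ) := by
      intro E hE
      have hden : ((gq E).den : ℚ) ≠ 0 := Nat.cast_ne_zero.2 (gq E).den_nz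
      have hnum : ((gq E).num : ℚ) = gq E * ((gq E).den : ℚ) :=
        (div_eq_iff hden).1 (Rat.num_div_den (gq E))
      have hdiv : ((q / (gq E).den : ℕ) : ℚ) = (q : ℚ) / ((gq E).den : ℚ) :=
        Nat.cast_div (hqdvd E hE) hden
      simp only [hgZ]
      rw [Int.cast_mul, Int.cast_natCast, hdiv, hnum]
      field_simp
    have hbalZ : ∀ S : Finset (Fin n), S.card = r - 2 →
        ∑ E ∈ H.filter (fun E => S ⊆ E), gZ E = 0 := by
      intro S hS
      have h1 : ((∑ E ∈ H.filter (fun E => S ⊆ E), gZ E : ℤ) : ℚ) = 0 := by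
        push_cast
        rw [Finset.sum_congr rfl
          (fun E hE => hcast E (Finset.mem_of_mem_filter E hE))]
        rw [← Finset.sum_mul, hbalQ S hS, zero_mul]
      exact_mod_cast h1
    have hz := nsib_descent hr huniform hint (∑ E ∈ H, (gZ E).natAbs) gZ hbalZ le_rfl i.1 i.2
    -- conclude gs i = 0
    have hdpos : 0 < q / (gq i.1).den :=
      Nat.div_pos (Nat.le_of_dvd (Nat.pos_of_ne_zero hq0) (hqdvd i.1 i.2))
        (Nat.pos_of_ne_zero (gq i.1).den_nz)
    have hne : ((q / (gq i.1).den : ℕ) : ℤ) ≠ 0 := by positivity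
    rw [hgZ] at hz
    simp only at hz
    have hnum0 : (gq i.1).num = 0 := (mul_eq_zero.1 hz).resolve_right hne
    have : gq i.1 = 0 := Rat.num_eq_zero.1 hnum0
    rw [hgqi i] at this
    exact this
  -- dimension count
  have h1 : Fintype.card {E // E ∈ H}
      ≤ Module.finrank ℚ ({S // S ∈ (Finset.univ : Finset (Fin n)).powersetCard (r-2)} → ℚ) :=
    li.fintype_card_le_finrank
  rw [Module.finrank_pi] at h1
  rw [Fintype.card_coe] at h1
  rw [Fintype.card_coe] at h1
  rw [Finset.card_powersetCard, Finset.card_univ, Fintype.card_fin] at h1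
  exact h1
end

section
/- Let r ≥ 3, k ≥ 1, ℓ ≥ 1, and t = k·⌊(ℓ+1)/2⌋ - 1. For n ≥ k·r·ℓ, the r-uniform hypergraph on [n] whose edges are all r-subsets meeting a fixed t-element set S, together with (when ℓ is even) all r-subsets of [n]\S containing two fixed vertices x, y ∉ S, contains no k pairwise vertex-disjoint linear paths of length ℓ, and has exactly Σ_{i=1}^{t} C(n-i, r-1) + [ℓ even]·C(n-t-2, r-2) edges. -/
/-- A linear path of length `ℓ`: distinct `r`-element edges with consecutive
edges meeting in exactly one vertex and non-consecutive edges disjoint. -/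
def IsLinearPath {α : Type*} [DecidableEq α] (r : ℕ) {ℓ : ℕ} (F : Fin ℓ → Finset α) : Prop :=
  (∀ i, (F i).card = r) ∧ Function.Injective F ∧
    ∀ i j : Fin ℓ, (i : ℕ) < j →
      if (j : ℕ) = (i : ℕ) + 1 then (F i ∩ F j).card = 1 else F i ∩ F j = ∅

lemma consec {n r ℓ : ℕ} {F : Fin ℓ → Finset (Fin n)} (hF : IsLinearPath r F)
    {i j : Fin ℓ} (hij : i ≠ j) {v : Fin n} (hvi : v ∈ F i) (hvj : v ∈ F j) :
    (j : ℕ) = (i : ℕ) + 1 ∨ (i : ℕ) = (j : ℕ) + 1 := by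
  obtain ⟨-, -, h3⟩ := hF
  have hne : (i : ℕ) ≠ (j : ℕ) := fun h => hij (Fin.val_injective h)
  rcases Nat.lt_or_ge (i : ℕ) (j : ℕ) with h | h
  · have := h3 i j h
    by_cases hc : (j : ℕ) = (i : ℕ) + 1
    · exact Or.inl hc
    · rw [if_neg hc] at this
      exact absurd (this ▸ Finset.mem_inter.2 ⟨hvi, hvj⟩) (Finset.notMem_empty v)
  · have hlt : (j : ℕ) < (i : ℕ) := by omega
    have := h3 j i hlt
    by_cases hc : (i : ℕ) = (j : ℕ) + 1
    · exact Or.inr hc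
    · rw [if_neg hc] at this
      exact absurd (this ▸ Finset.mem_inter.2 ⟨hvj, hvi⟩) (Finset.notMem_empty v)

-- each vertex lies in at most 2 edges
lemma degree_le_two {n r ℓ : ℕ} {F : Fin ℓ → Finset (Fin n)} (hF : IsLinearPath r F)
    (v : Fin n) : (Finset.univ.filter (fun i => v ∈ F i)).card ≤ 2 := by
  by_contra h
  push_neg at h
  obtain ⟨T, hTsub, hT3⟩ := Finset.exists_subset_card_eq (show 3 ≤ _ from h)
  obtain ⟨a, b, c, hab, hac, hbc, rfl⟩ := Finset.card_eq_three.1 hT3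
  have ha := (Finset.mem_filter.1 (hTsub (show a ∈ ({a, b, c} : Finset (Fin ℓ)) by simp))).2
  have hb := (Finset.mem_filter.1 (hTsub (show b ∈ ({a, b, c} : Finset (Fin ℓ)) by simp))).2
  have hc := (Finset.mem_filter.1 (hTsub (show c ∈ ({a, b, c} : Finset (Fin ℓ)) by simp))).2
  have h1 := consec hF hab ha hb
  have h2 := consec hF hac ha hc
  have h3 := consec hF hbc hb hc
  have e1 : (a : ℕ) ≠ b := fun h => hab (Fin.val_injective h)
  have e2 : (a : ℕ) ≠ c := fun h => hac (Fin.val_injective h)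
  have e3 : (b : ℕ) ≠ c := fun h => hbc (Fin.val_injective h)
  omega

lemma two_edges_not_xy {n r ℓ : ℕ} {F : Fin ℓ → Finset (Fin n)} (hF : IsLinearPath r F)
    {x y : Fin n} (hxy : x ≠ y) {i j : Fin ℓ} (hij : i ≠ j)
    (hxi : x ∈ F i) (hyi : y ∈ F i) (hxj : x ∈ F j) (hyj : y ∈ F j) : False := by
  obtain ⟨-, -, h3⟩ := hF
  have key : ∀ i' j' : Fin ℓ, (i' : ℕ) < j' → x ∈ F i' → y ∈ F i' → x ∈ F j' → y ∈ F j' → False := by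
    intro i' j' hlt hxi' hyi' hxj' hyj'
    have := h3 i' j' hlt
    have hsub : ({x, y} : Finset (Fin n)) ⊆ F i' ∩ F j' := by
      intro v hv
      simp only [Finset.mem_insert, Finset.mem_singleton] at hv
      rcases hv with rfl | rfl <;> exact Finset.mem_inter.2 ⟨by assumption, by assumption⟩
    have hcard2 : 2 ≤ (F i' ∩ F j').card := by
      calc 2 = ({x, y} : Finset (Fin n)).card := by
              rw [Finset.card_insert_of_notMem (by simp [hxy]), Finset.card_singleton]
           _ ≤ _ := Finset.card_le_card hsub
    by_cases hc : (j' : ℕ) = (i' : ℕ) + 1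
    · rw [if_pos hc] at this; omega
    · rw [if_neg hc] at this
      rw [this] at hcard2; simp at hcard2
  have hne : (i : ℕ) ≠ (j : ℕ) := fun h => hij (Fin.val_injective h)
  rcases Nat.lt_or_ge (i : ℕ) (j : ℕ) with h | h
  · exact key i j h hxi hyi hxj hyj
  · exact key j i (by omega) hxj hyj hxi hyi

-- per-path lower bound on S-vertices
lemma path_S_bound {n r ℓ : ℕ} (hℓ : 1 ≤ ℓ) {F : Fin ℓ → Finset (Fin n)}
    (hF : IsLinearPath r F) {S : Finset (Fin n)} {x y : Fin n} (hxy : x ≠ y)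
    (hmem : ∀ i, (F i ∩ S).Nonempty ∨ (ℓ % 2 = 0 ∧ Disjoint (F i) S ∧ x ∈ F i ∧ y ∈ F i)) :
    (ℓ + 1) / 2 ≤ (S ∩ Finset.univ.biUnion F).card := by
  classical
  set V := Finset.univ.biUnion F with hV
  set Bad := (Finset.univ : Finset (Fin ℓ)).filter (fun i => ¬ (F i ∩ S).Nonempty) with hBad
  -- bad edges contain x and y, with ℓ even
  have hbadxy : ∀ i ∈ Bad, ℓ % 2 = 0 ∧ x ∈ F i ∧ y ∈ F i := by
    intro i hi
    have := (Finset.mem_filter.1 hi).2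
    rcases hmem i with h | ⟨he, -, hx, hy⟩
    · exact absurd h this
    · exact ⟨he, hx, hy⟩
  have hbadcard : Bad.card ≤ if ℓ % 2 = 0 then 1 else 0 := by
    by_cases he : ℓ % 2 = 0
    · rw [if_pos he]
      apply Finset.card_le_one.2
      intro i hi j hj
      by_contra hij
      obtain ⟨-, hxi, hyi⟩ := hbadxy i hi
      obtain ⟨-, hxj, hyj⟩ := hbadxy j hj
      exact two_edges_not_xy hF hxy hij hxi hyi hxj hyj
    · rw [if_neg he]
      simp only [Finset.card_eq_zero.symm.symm, Nat.le_zero, Finset.card_eq_zero]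
      rw [Finset.eq_empty_iff_forall_notMem]
      intro i hi
      exact he (hbadxy i hi).1
  -- sum of |F i ∩ S| double count
  have hinter : ∀ i, F i ∩ S = (S ∩ V).filter (· ∈ F i) := by
    intro i
    ext v
    simp only [Finset.mem_inter, Finset.mem_filter, hV, Finset.mem_biUnion, Finset.mem_univ,
      true_and]
    constructor
    · rintro ⟨h1, h2⟩; exact ⟨⟨h2, ⟨i, h1⟩⟩, h1⟩
    · rintro ⟨⟨h2, -⟩, h1⟩; exact ⟨h1, h2⟩
  have hdouble : ∑ i : Fin ℓ, (F i ∩ S).card ≤ 2 * (S ∩ V).card := by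
    calc ∑ i : Fin ℓ, (F i ∩ S).card
        = ∑ i : Fin ℓ, ∑ v ∈ S ∩ V, (if v ∈ F i then 1 else 0) := by
          refine Finset.sum_congr rfl fun i _ => ?_
          rw [hinter i, Finset.card_filter]
      _ = ∑ v ∈ S ∩ V, ∑ i : Fin ℓ, (if v ∈ F i then 1 else 0) := Finset.sum_comm
      _ = ∑ v ∈ S ∩ V, (Finset.univ.filter (fun i => v ∈ F i)).card := by
          refine Finset.sum_congr rfl fun v _ => ?_
          rw [Finset.card_filter]
      _ ≤ ∑ v ∈ S ∩ V, 2 := Finset.sum_le_sum fun v _ => degree_le_two hF v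
      _ = 2 * (S ∩ V).card := by rw [Finset.sum_const, smul_eq_mul, mul_comm]
  -- good edges contribute at least 1
  have hgood : ℓ - Bad.card ≤ ∑ i : Fin ℓ, (F i ∩ S).card := by
    have hpart := Finset.card_filter_add_card_filter_not
      (s := (Finset.univ : Finset (Fin ℓ))) (p := fun i => (F i ∩ S).Nonempty)
    rw [Finset.card_univ, Fintype.card_fin] at hpart
    have hBadeq : (Finset.univ.filter (fun i => ¬ (F i ∩ S).Nonempty)).card = Bad.card := rfl
    rw [hBadeq] at hpart
    set Good := (Finset.univ : Finset (Fin ℓ)).filter (fun i => (F i ∩ S).Nonempty) with hGood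
    have h1 : Good.card ≤ ∑ i ∈ Good, (F i ∩ S).card := by
      have := Finset.card_nsmul_le_sum Good (fun i => (F i ∩ S).card) 1
        (fun i hi => Finset.card_pos.2 (Finset.mem_filter.1 hi).2)
      simpa using this
    have h2 : ∑ i ∈ Good, (F i ∩ S).card ≤ ∑ i : Fin ℓ, (F i ∩ S).card :=
      Finset.sum_le_sum_of_subset (Finset.subset_univ _)
    omega
  have hfinal : ℓ - Bad.card ≤ 2 * (S ∩ V).card := hgood.trans hdouble
  rcases Nat.mod_two_eq_zero_or_one ℓ with he | he
  · rw [if_pos he] at hbadcard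
    omega
  · rw [if_neg (by omega)] at hbadcard
    omega

lemma count_meet (n r : ℕ) (S : Finset (Fin n)) :
    ((Finset.univ.powersetCard r).filter (fun F => (F ∩ S).Nonempty)).card
      = n.choose r - (n - S.card).choose r := by
  classical
  have h1 : (Finset.univ.powersetCard r).filter (fun F => ¬ (F ∩ S).Nonempty)
      = Sᶜ.powersetCard r := by
    ext F
    simp only [Finset.mem_filter, Finset.mem_powersetCard, Finset.not_nonempty_iff_eq_empty]
    constructor
    · rintro ⟨⟨-, hc⟩, h⟩
      refine ⟨fun v hv => Finset.mem_compl.2 fun hvS => ?_, hc⟩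
      have : v ∈ F ∩ S := Finset.mem_inter.2 ⟨hv, hvS⟩
      rw [h] at this
      exact absurd this (Finset.notMem_empty v)
    · rintro ⟨h, hc⟩
      refine ⟨⟨fun v _ => Finset.mem_univ v, hc⟩, ?_⟩
      rw [Finset.eq_empty_iff_forall_notMem]
      intro v hv
      rw [Finset.mem_inter] at hv
      exact Finset.mem_compl.1 (h hv.1) hv.2
  have h2 := Finset.card_filter_add_card_filter_not
    (s := Finset.univ.powersetCard r) (p := fun F => (F ∩ S).Nonempty)
  rw [h1, Finset.card_powersetCard, Finset.card_powersetCard, Finset.card_univ,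
    Fintype.card_fin] at h2
  have h3 : Sᶜ.card = n - S.card := by
    rw [Finset.card_compl, Fintype.card_fin]
  rw [h3] at h2
  have := Nat.choose_le_choose r (show n - S.card ≤ n by omega)
  omega

lemma count_special (n r : ℕ) (hr : 2 ≤ r) (S : Finset (Fin n)) (x y : Fin n)
    (hx : x ∉ S) (hy : y ∉ S) (hxy : x ≠ y) :
    ((Finset.univ.powersetCard r).filter (fun F => Disjoint F S ∧ x ∈ F ∧ y ∈ F)).card
      = (n - S.card - 2).choose (r - 2) := by
  classical
  have hcard : (Sᶜ \ {x, y}).card = n - S.card - 2 := by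
    rw [Finset.card_sdiff_of_subset (by
      intro v hv
      simp only [Finset.mem_insert, Finset.mem_singleton] at hv
      rcases hv with rfl | rfl <;> simp [hx, hy]),
      Finset.card_compl, Fintype.card_fin, Finset.card_insert_of_notMem (by simp [hxy]),
      Finset.card_singleton]
  rw [← hcard, ← Finset.card_powersetCard]
  refine Finset.card_bij' (fun F _ => F \ {x, y}) (fun G _ => insert x (insert y G))
    ?_ ?_ ?_ ?_
  · rintro F hF
    simp only [Finset.mem_filter, Finset.mem_powersetCard] at hF
    obtain ⟨⟨-, hFc⟩, hdisj, hxF, hyF⟩ := hF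
    simp only [Finset.mem_powersetCard]
    constructor
    · intro v hv
      simp only [Finset.mem_sdiff] at hv ⊢
      exact ⟨Finset.mem_compl.2 (fun hvS => Finset.disjoint_left.1 hdisj hv.1 hvS), hv.2⟩
    · rw [Finset.card_sdiff_of_subset (by
        intro v hv
        simp only [Finset.mem_insert, Finset.mem_singleton] at hv
        rcases hv with rfl | rfl <;> assumption)]
      rw [hFc, Finset.card_insert_of_notMem (by simp [hxy]), Finset.card_singleton]
  · rintro G hG
    simp only [Finset.mem_powersetCard] at hG
    obtain ⟨hGs, hGc⟩ := hG
    have hxG : x ∉ G := fun h => by simpa [hxy] using Finset.mem_sdiff.1 (hGs h)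
    have hyG : y ∉ G := fun h => by simpa using Finset.mem_sdiff.1 (hGs h)
    simp only [Finset.mem_filter, Finset.mem_powersetCard]
    refine ⟨⟨fun _ _ => Finset.mem_univ _, ?_⟩, ?_, by simp, by simp⟩
    · rw [Finset.card_insert_of_notMem (by simp [hxy, hxG]),
        Finset.card_insert_of_notMem hyG, hGc]
      omega
    · rw [Finset.disjoint_left]
      intro v hv hvS
      simp only [Finset.mem_insert] at hv
      rcases hv with rfl | rfl | hv
      · exact hx hvS
      · exact hy hvS
      · exact absurd hvS (by simpa using (Finset.mem_sdiff.1 (hGs hv)).1)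
  · rintro F hF
    simp only [Finset.mem_filter, Finset.mem_powersetCard] at hF
    obtain ⟨-, -, hxF, hyF⟩ := hF
    ext v
    simp only [Finset.mem_insert, Finset.mem_sdiff, Finset.mem_singleton]
    constructor
    · rintro (rfl | rfl | ⟨h, -⟩) <;> assumption
    · intro hv
      by_cases h1 : v = x
      · exact Or.inl h1
      · by_cases h2 : v = y
        · exact Or.inr (Or.inl h2)
        · exact Or.inr (Or.inr ⟨hv, by simp [h1, h2]⟩)
  · rintro G hG
    simp only [Finset.mem_powersetCard] at hG
    have hxG : x ∉ G := fun h => by simpa [hxy] using Finset.mem_sdiff.1 (hG.1 h)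
    have hyG : y ∉ G := fun h => by simpa using Finset.mem_sdiff.1 (hG.1 h)
    ext v
    simp only [Finset.mem_sdiff, Finset.mem_insert, Finset.mem_singleton]
    constructor
    · rintro ⟨rfl | rfl | hv, h⟩
      · exact absurd (Or.inl rfl) h
      · exact absurd (Or.inr rfl) h
      · exact hv
    · intro hv
      exact ⟨Or.inr (Or.inr hv), by rintro (rfl | rfl); exacts [hxG hv, hyG hv]⟩

-- telescoping sum
lemma sum_choose_telescope (n r t : ℕ) (hr : 1 ≤ r) (h : t ≤ n) :
    ∑ i ∈ Finset.Icc 1 t, (n - i).choose (r - 1) = n.choose r - (n - t).choose r := by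
  induction t with
  | zero => simp
  | succ t ih =>
    rw [Finset.sum_Icc_succ_top (by omega : 1 ≤ t + 1), ih (by omega)]
    have hm : n - t = (n - (t+1)) + 1 := by omega
    have hp : (n - t).choose r = (n - (t+1)).choose (r-1) + (n - (t+1)).choose r := by
      rw [hm]
      obtain ⟨r', rfl⟩ : ∃ r', r = r' + 1 := ⟨r - 1, by omega⟩
      simp [Nat.choose_succ_succ]
    have hmono : (n - t).choose r ≤ n.choose r := Nat.choose_le_choose r (by omega)
    omega

/-- Lower-bound construction for forests of linear paths: with
`t = k·⌊(ℓ+1)/2⌋ - 1`, the hypergraph of all `r`-sets meeting a fixed `t`-set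
`S`, together with (for even `ℓ`) all `r`-sets avoiding `S` and containing two
fixed vertices `x, y ∉ S`, contains no `k` pairwise vertex-disjoint linear
paths of length `ℓ`, and has `∑_{i=1}^{t} C(n-i,r-1) + [ℓ even]·C(n-t-2,r-2)`
edges. -/
theorem linear_forest_construction (n r k ℓ : ℕ) (hr : 3 ≤ r) (hk : 1 ≤ k)
    (hℓ : 1 ≤ ℓ) (hn : k * r * ℓ ≤ n)
    (S : Finset (Fin n)) (hS : S.card = k * ((ℓ + 1) / 2) - 1)
    (x y : Fin n) (hx : x ∉ S) (hy : y ∉ S) (hxy : x ≠ y) :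
    (¬ ∃ P : Fin k → Fin ℓ → Finset (Fin n),
        (∀ a, IsLinearPath r (P a)) ∧
        (∀ a i, P a i ∈ (Finset.univ.powersetCard r).filter
          (fun F => (F ∩ S).Nonempty ∨
            (ℓ % 2 = 0 ∧ Disjoint F S ∧ x ∈ F ∧ y ∈ F))) ∧
        (∀ a b, a ≠ b → ∀ i j, Disjoint (P a i) (P b j))) ∧
    ((Finset.univ.powersetCard r).filter
        (fun F => (F ∩ S).Nonempty ∨
          (ℓ % 2 = 0 ∧ Disjoint F S ∧ x ∈ F ∧ y ∈ F))).card
      = (∑ i ∈ Finset.Icc 1 (k * ((ℓ + 1) / 2) - 1), (n - i).choose (r - 1))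
        + (if ℓ % 2 = 0 then (n - (k * ((ℓ + 1) / 2) - 1) - 2).choose (r - 2) else 0) := by
  classical
  have hm : 1 ≤ (ℓ + 1) / 2 := by omega
  have ht : k * ((ℓ + 1) / 2) - 1 ≤ n := by
    have h1 : (ℓ + 1) / 2 ≤ ℓ := by omega
    have h2 : k * ((ℓ + 1) / 2) ≤ k * ℓ := Nat.mul_le_mul_left k h1
    have h3 : k * ℓ ≤ k * r * ℓ := by
      have : k ≤ k * r := Nat.le_mul_of_pos_right k (by omega)
      exact Nat.mul_le_mul_right ℓ this
    omega
  constructor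
  · rintro ⟨P, hpath, hmem, hdisj⟩
    have hpb : ∀ a : Fin k, (ℓ + 1) / 2 ≤ (S ∩ Finset.univ.biUnion (P a)).card := by
      intro a
      apply path_S_bound hℓ (hpath a) hxy
      intro i
      exact (Finset.mem_filter.1 (hmem a i)).2
    have hWdisj : ∀ a ∈ (Finset.univ : Finset (Fin k)), ∀ b ∈ (Finset.univ : Finset (Fin k)),
        a ≠ b → Disjoint (S ∩ Finset.univ.biUnion (P a)) (S ∩ Finset.univ.biUnion (P b)) := by
      intro a _ b _ hab
      rw [Finset.disjoint_left]
      intro v hv1 hv2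
      obtain ⟨-, hv1⟩ := Finset.mem_inter.1 hv1
      obtain ⟨-, hv2⟩ := Finset.mem_inter.1 hv2
      obtain ⟨i, -, hi⟩ := Finset.mem_biUnion.1 hv1
      obtain ⟨j, -, hj⟩ := Finset.mem_biUnion.1 hv2
      exact Finset.disjoint_left.1 (hdisj a b hab i j) hi hj
    have hsum : ∑ a : Fin k, (S ∩ Finset.univ.biUnion (P a)).card ≤ S.card := by
      rw [← Finset.card_biUnion hWdisj]
      apply Finset.card_le_card
      intro v hv
      obtain ⟨a, -, hv⟩ := Finset.mem_biUnion.1 hv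
      exact (Finset.mem_inter.1 hv).1
    have hsum2 : k * ((ℓ + 1) / 2) ≤ ∑ a : Fin k, (S ∩ Finset.univ.biUnion (P a)).card := by
      calc k * ((ℓ + 1) / 2) = ∑ _a : Fin k, (ℓ + 1) / 2 := by
            rw [Finset.sum_const, Finset.card_univ, Fintype.card_fin, smul_eq_mul]
        _ ≤ _ := Finset.sum_le_sum fun a _ => hpb a
    rw [hS] at hsum
    have hpos : 1 ≤ k * ((ℓ + 1) / 2) := by
      calc 1 = 1 * 1 := rfl
        _ ≤ k * ((ℓ + 1) / 2) := Nat.mul_le_mul hk hm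
    omega
  · rw [Finset.filter_or, Finset.card_union_of_disjoint (by
      rw [Finset.disjoint_left]
      intro F h1 h2
      obtain ⟨v, hv⟩ := (Finset.mem_filter.1 h1).2
      exact Finset.disjoint_left.1 (Finset.mem_filter.1 h2).2.2.1
        (Finset.mem_inter.1 hv).1 (Finset.mem_inter.1 hv).2)]
    congr 1
    · rw [count_meet, hS, sum_choose_telescope n r _ (by omega) ht]
    · by_cases he : ℓ % 2 = 0
      · rw [if_pos he]
        have : (Finset.univ.powersetCard r).filter
            (fun F => ℓ % 2 = 0 ∧ Disjoint F S ∧ x ∈ F ∧ y ∈ F)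
            = (Finset.univ.powersetCard r).filter
            (fun F => Disjoint F S ∧ x ∈ F ∧ y ∈ F) := by
          apply Finset.filter_congr
          intro F _
          simp [he]
        rw [this, count_special n r (by omega) S x y hx hy hxy, hS]
      · rw [if_neg he]
        rw [Finset.card_eq_zero, Finset.eq_empty_iff_forall_notMem]
        intro F hF
        exact he (Finset.mem_filter.1 hF).2.1
end

section
/- Let r ≥ 3, let ℓ ≥ 2 be even, and let t = ⌊(ℓ+1)/2⌋ - 1. Then the r-uniform hypergraph on [n] (n large) whose edges are all r-subsets meeting a fixed t-set S, plus one additional edge E_0 disjoint from S, contains no loose path with ℓ edges. -/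
/-- A loose path of length `ℓ`: distinct `r`-element edges `F 0, …, F (ℓ-1)`
with `F i ∩ F j ≠ ∅` iff `|i - j| = 1`. -/
def IsLoosePath {α : Type*} [DecidableEq α] (r : ℕ) {ℓ : ℕ} (F : Fin ℓ → Finset α) : Prop :=
  (∀ i, (F i).card = r) ∧ Function.Injective F ∧
    ∀ i j : Fin ℓ, i ≠ j →
      ((F i ∩ F j).Nonempty ↔ ((i : ℕ) + 1 = j ∨ (j : ℕ) + 1 = i))

/-- Even-case lower-bound construction: for even `ℓ` and `t = ℓ/2 - 1`, the
hypergraph of all `r`-sets meeting a fixed `t`-set `S` together with one extra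
edge `E₀` disjoint from `S` contains no loose path with `ℓ` edges. -/
theorem even_loose_path_construction (n r ℓ : ℕ) (hr : 3 ≤ r) (hℓ : 2 ≤ ℓ)
    (heven : Even ℓ) (hn : r * ℓ ≤ n)
    (S : Finset (Fin n)) (hS : S.card = ℓ / 2 - 1)
    (E₀ : Finset (Fin n)) (hE₀card : E₀.card = r) (hE₀S : Disjoint E₀ S) :
    ¬ ∃ F : Fin ℓ → Finset (Fin n),
        IsLoosePath r F ∧ ∀ i, (F i ∩ S).Nonempty ∨ F i = E₀ := by
  rintro ⟨F, ⟨hcard, hinj, hadj⟩, hmeet⟩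
  obtain ⟨m, hm⟩ := heven
  -- choose a parity b so that no edge with index of parity b equals E₀
  obtain ⟨b, hb1, hbE⟩ : ∃ b, b ≤ 1 ∧ ∀ i : Fin ℓ, i.val % 2 = b → F i ≠ E₀ := by
    by_cases h : ∃ i, F i = E₀
    · obtain ⟨i, hi⟩ := h
      refine ⟨1 - i.val % 2, Nat.sub_le _ _, fun j hj hFj => ?_⟩
      have hji : j = i := hinj (hFj.trans hi.symm)
      subst hji; omega
    · exact ⟨0, Nat.zero_le 1, fun j _ hFj => h ⟨j, hFj⟩⟩
  have hlt : ∀ k : Fin (ℓ/2), 2 * k.val + b < ℓ := by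
    intro k; have := k.isLt; omega
  set g : Fin (ℓ/2) → Fin ℓ := fun k => ⟨2 * k.val + b, hlt k⟩ with hg
  have hmeetS : ∀ k, (F (g k) ∩ S).Nonempty := by
    intro k
    refine (hmeet (g k)).resolve_right (hbE (g k) ?_)
    show (2 * k.val + b) % 2 = b
    omega
  choose c hc using hmeetS
  have hcS : ∀ k, c k ∈ S := fun k => (Finset.mem_inter.1 (hc k)).2
  have hcF : ∀ k, c k ∈ F (g k) := fun k => (Finset.mem_inter.1 (hc k)).1
  have hinjc : Set.InjOn c (Finset.univ : Finset (Fin (ℓ/2))) := by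
    intro k _ k' _ hcc
    by_contra hne
    have hvne : k.val ≠ k'.val := fun h => hne (Fin.ext h)
    have hgne : g k ≠ g k' := by
      simp only [hg, Ne, Fin.mk.injEq]; omega
    have := (hadj (g k) (g k') hgne).1
      ⟨c k, Finset.mem_inter.2 ⟨hcF k, hcc ▸ hcF k'⟩⟩
    simp only [hg] at this
    omega
  have hle := Finset.card_le_card_of_injOn c (fun k _ => hcS k) hinjc
  simp only [Finset.card_univ, Fintype.card_fin, hS] at hle
  omega
end
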